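/- arXiv:2510.01602 — 6 statements merged into one kernel-verified Lean document; each statement's English description precedes it below -/
import Mathlib

section
/- For all s ∈ [-1,1] and t ∈ [-1,1], 2(11 + s²) - (s-1)² t (8 + (s-3)t) ≥ 17 + 9s - s² - s³, and moreover 17 + 9s - s² - s³ > 0 for all s ∈ [-1,1]. -/
/-!
The difference of the two sides of the inequality factors as
`(s - 1)² ((s + 1)(1 - t²) + 4(1 - t)²)`, a product of nonnegative terms on the square.
The cubic is `8 + (s + 1)(9 - s²)`, which is positive for `-1 ≤ s ≤ 3`.
-/

theorem sub_cubic_eq_sq_mul (s t : ℝ) :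
    2 * (11 + s^2) - (s - 1)^2 * t * (8 + (s - 3) * t) - (17 + 9*s - s^2 - s^3) =
      (s - 1)^2 * ((s + 1) * (1 - t^2) + 4 * (1 - t)^2) := by
  ring

theorem cubic_le_of_neg_one_le_of_sq_le_one {s t : ℝ} (hs : -1 ≤ s) (ht : t^2 ≤ 1) :
    17 + 9*s - s^2 - s^3 ≤ 2 * (11 + s^2) - (s - 1)^2 * t * (8 + (s - 3) * t) := by
  have h : 0 ≤ (s - 1)^2 * ((s + 1) * (1 - t^2) + 4 * (1 - t)^2) := by
    have : 0 ≤ s + 1 := by linarith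
    have : 0 ≤ 1 - t^2 := by linarith
    positivity
  linarith [sub_cubic_eq_sq_mul s t]

theorem cubic_pos_of_mem_Icc {s : ℝ} (hs : s ∈ Set.Icc (-1:ℝ) 3) :
    0 < 17 + 9*s - s^2 - s^3 := by
  obtain ⟨hs₁, hs₃⟩ := hs
  have h : 0 ≤ (s + 1) * (9 - s^2) := by
    apply mul_nonneg <;> nlinarith
  linarith [show 17 + 9*s - s^2 - s^3 = 8 + (s + 1) * (9 - s^2) by ring]

theorem stmt_1 (s t : ℝ) (hs : s ∈ Set.Icc (-1:ℝ) 1) (ht : t ∈ Set.Icc (-1:ℝ) 1) :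
    2 * (11 + s^2) - (s - 1)^2 * t * (8 + (s - 3) * t) ≥ 17 + 9*s - s^2 - s^3 ∧
    17 + 9*s - s^2 - s^3 > 0 := by
  have ht_sq : t^2 ≤ 1 := sq_le_one_iff_abs_le_one t |>.mpr (abs_le.mpr ht)
  exact ⟨cubic_le_of_neg_one_le_of_sq_le_one hs.1 ht_sq,
    cubic_pos_of_mem_Icc ⟨hs.1, by linarith [hs.2]⟩⟩
end

section
/- For all s ∈ [-1,1] and t ∈ [-1,1], 8(5+s)(2(5-s) + (s-1)t(8 + (s-1)t)) ≥ 8(1+s)(3+s)(5+s) ≥ 0. -/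
/-! With `u = (1 - s) t`, the gap between the two sides of the first inequality is
`8 (5 + s) ((1 - s) - u) ((7 + s) - u)`, and every factor is nonnegative on the square since `u ≤ 1 - s`. -/

lemma resolvent_gap_eq (s t : ℝ) :
    8 * (5 + s) * (2 * (5 - s) + (s - 1) * t * (8 + (s - 1) * t)) -
        8 * (1 + s) * (3 + s) * (5 + s) =
      8 * (5 + s) * ((1 - s) * (1 - t) * (7 + s - (1 - s) * t)) := by
  ring

lemma resolvent_gap_nonneg {s t : ℝ} (hs₁ : -3 ≤ s) (hs₂ : s ≤ 1) (ht : t ≤ 1) :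
    0 ≤ 8 * (5 + s) * ((1 - s) * (1 - t) * (7 + s - (1 - s) * t)) := by
  have hlast : 0 ≤ 7 + s - (1 - s) * t := by nlinarith [mul_le_mul_of_nonneg_left ht (sub_nonneg.2 hs₂)]
  have h₁ : 0 ≤ 1 - s := by linarith
  have h₂ : 0 ≤ 1 - t := by linarith
  have h₅ : 0 ≤ 5 + s := by linarith
  positivity

theorem stmt_2 (s t : ℝ) (hs : s ∈ Set.Icc (-1:ℝ) 1) (ht : t ∈ Set.Icc (-1:ℝ) 1) :
    8 * (5 + s) * (2 * (5 - s) + (s - 1) * t * (8 + (s - 1) * t)) ≥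
      8 * (1 + s) * (3 + s) * (5 + s) ∧
    8 * (1 + s) * (3 + s) * (5 + s) ≥ 0 := by
  obtain ⟨hs₁, hs₂⟩ := hs
  refine ⟨?_, ?_⟩
  · rw [ge_iff_le, ← sub_nonneg, resolvent_gap_eq]
    exact resolvent_gap_nonneg (by linarith) hs₂ ht.2
  · have h₁ : 0 ≤ 1 + s := by linarith
    have h₃ : 0 ≤ 3 + s := by linarith
    have h₅ : 0 ≤ 5 + s := by linarith
    positivity
end

section
/- For all s ∈ [-1,1] and t ∈ [-1,1], 16(3 + s²) + (s-1)t(8(7 + s²) + (s-1)(17 + s(2+s))t) ≥ (1+s)²(3+s)² ≥ 0. -/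
/-! The difference of the two sides vanishes on the line `t = 1` and is divisible by `1 - s`;
writing it in powers of `1 - t` gives
`2 (1 - s)(1 + s)((s + 2)² + 7)(1 - t) + (1 - s)²(1 - t)²((1 + s)² + 16)`,
a sum of nonnegative terms as soon as `|s| ≤ 1` and `t ≤ 1`. -/

open Set

theorem discriminant_sub_eq (s t : ℝ) :
    16 * (3 + s^2) + (s - 1) * t * (8 * (7 + s^2) + (s - 1) * (17 + s * (2 + s)) * t) -
        (1 + s)^2 * (3 + s)^2 =
      2 * (1 - s) * (1 + s) * ((s + 2)^2 + 7) * (1 - t) +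
        ((1 - s) * (1 - t))^2 * ((1 + s)^2 + 16) := by
  ring

theorem le_discriminant {s t : ℝ} (hs : s ∈ Icc (-1 : ℝ) 1) (ht : t ≤ 1) :
    (1 + s)^2 * (3 + s)^2 ≤
      16 * (3 + s^2) + (s - 1) * t * (8 * (7 + s^2) + (s - 1) * (17 + s * (2 + s)) * t) := by
  have hsum : 0 ≤ 2 * (1 - s) * (1 + s) * ((s + 2)^2 + 7) * (1 - t) +
      ((1 - s) * (1 - t))^2 * ((1 + s)^2 + 16) := by
    have h1s : 0 ≤ 1 - s := by linarith [hs.2]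
    have h1s' : 0 ≤ 1 + s := by linarith [hs.1]
    have h1t : 0 ≤ 1 - t := by linarith
    positivity
  linarith [discriminant_sub_eq s t]

theorem stmt_3 (s t : ℝ) (hs : s ∈ Set.Icc (-1:ℝ) 1) (ht : t ∈ Set.Icc (-1:ℝ) 1) :
    16 * (3 + s^2) + (s - 1) * t * (8 * (7 + s^2) + (s - 1) * (17 + s * (2 + s)) * t) ≥
      (1 + s)^2 * (3 + s)^2 ∧
    (1 + s)^2 * (3 + s)^2 ≥ 0 :=
  ⟨le_discriminant hs ht.2, by positivity⟩
end

section
/- For every f ∈ (0,1), the quadratic φ(u) = (1/6)[(62 - f(62 - 15f)) u² - (20 - f)(2 - f) u + 6] is strictly positive for all u ≥ 1. In particular φ(1) = (1/3)(14 + f(-20 + 7f)) > 0. -/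
/-! With `a = 62 - f (62 - 15 f)` and `b = (20 - f)(2 - f)`, write
`a u² - b u + 6 = (a - b + 6) + (u - 1) (a (u - 1) + (2a - b))`.
For `f < 1` each of `a`, `2a - b` and `a - b + 6 = 2 (14 - 20 f + 7 f²)` is a positive multiple of
`(1 - f)²` plus a positive linear term in `f`, so every summand is nonnegative for `u ≥ 1` and the
first is positive. -/

theorem quadratic_pos_of_one_le {a b c u : ℝ} (ha : 0 ≤ a) (hvertex : b ≤ 2 * a)
    (hone : 0 < a - b + c) (hu : 1 ≤ u) : 0 < a * u ^ 2 - b * u + c := by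
  have hu' : 0 ≤ u - 1 := sub_nonneg.2 hu
  have hsplit : a * u ^ 2 - b * u + c = (a - b + c) + (u - 1) * (a * (u - 1) + (2 * a - b)) := by
    ring
  rw [hsplit]
  exact add_pos_of_pos_of_nonneg hone
    (mul_nonneg hu' (add_nonneg (mul_nonneg ha hu') (sub_nonneg.2 hvertex)))

section Coefficients

variable {f : ℝ}

theorem leading_coeff_pos (hf : f < 1) : 0 < 62 - f * (62 - 15 * f) := by
  nlinarith [sq_nonneg (1 - f)]

theorem linear_coeff_le_two_mul_leading_coeff (hf : f < 1) :
    (20 - f) * (2 - f) ≤ 2 * (62 - f * (62 - 15 * f)) := by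
  nlinarith [sq_nonneg (1 - f)]

theorem value_at_one_pos (hf : f < 1) : 0 < 14 + f * (-20 + 7 * f) := by
  nlinarith [sq_nonneg (1 - f)]

end Coefficients

theorem stmt_6 (f : ℝ) (hf : f ∈ Set.Ioo (0:ℝ) 1) :
    (∀ u : ℝ, 1 ≤ u →
      0 < (1/6) * ((62 - f * (62 - 15 * f)) * u^2 - (20 - f) * (2 - f) * u + 6)) ∧
    (1/6) * ((62 - f * (62 - 15 * f)) * 1^2 - (20 - f) * (2 - f) * 1 + 6) =
      (1/3) * (14 + f * (-20 + 7 * f)) ∧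
    0 < (1/3) * (14 + f * (-20 + 7 * f)) := by
  have hf1 : f < 1 := hf.2
  have hone : 0 < (62 - f * (62 - 15 * f)) - (20 - f) * (2 - f) + 6 := by
    linarith [value_at_one_pos hf1]
  refine ⟨fun u hu => ?_, by ring, by linarith [value_at_one_pos hf1]⟩
  exact mul_pos (by norm_num) (quadratic_pos_of_one_le (leading_coeff_pos hf1).le
    (linear_coeff_le_two_mul_leading_coeff hf1) hone hu)
end

section
/- For every f ∈ (0,1) and s ∈ [-1,1], (5 - 4f + s)(f²(7+s) + (3+s)(9+s) - 4f(7+2s)) > (5 - 4f + s)(2+s)(3+s) > 0. -/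
lemma coriolis_gap_eq (f s : ℝ) :
    f^2 * (7 + s) + (3 + s) * (9 + s) - 4 * f * (7 + 2*s) - (2 + s) * (3 + s) =
      (1 - f) * ((7 + s) * (1 - f) + 2 * (7 + 3*s)) := by
  ring

lemma coriolis_gap_pos {f s : ℝ} (hf : f < 1) (hs : -1 ≤ s) :
    (2 + s) * (3 + s) < f^2 * (7 + s) + (3 + s) * (9 + s) - 4 * f * (7 + 2*s) := by
  rw [← sub_pos, coriolis_gap_eq]
  have h1f : 0 < 1 - f := by linarith
  exact mul_pos h1f (add_pos (mul_pos (by linarith) h1f) (by linarith))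

theorem stmt_7 (f s : ℝ) (hf : f ∈ Set.Ioo (0:ℝ) 1) (hs : s ∈ Set.Icc (-1:ℝ) 1) :
    (5 - 4*f + s) * (f^2 * (7 + s) + (3 + s) * (9 + s) - 4 * f * (7 + 2*s)) >
      (5 - 4*f + s) * (2 + s) * (3 + s) ∧
    (5 - 4*f + s) * (2 + s) * (3 + s) > 0 := by
  obtain ⟨-, hf1⟩ := hf
  obtain ⟨hs1, -⟩ := hs
  have hA : 0 < 5 - 4*f + s := by linarith
  have hB : 0 < (2 + s) * (3 + s) := mul_pos (by linarith) (by linarith)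
  rw [mul_assoc (5 - 4*f + s)]
  exact ⟨mul_lt_mul_of_pos_left (coriolis_gap_pos hf1 hs1) hA, mul_pos hA hB⟩
end

section
/- Let ν > 0, f ∈ (0,1), C > 0, ξ₁* > 0 and let h : ℝ → ℝ be nonnegative, continuously differentiable, not identically zero, satisfying ξ₁* h'(ξ₂) ≥ 2(Reλ + ν(a² + ξ₂²))h(ξ₂) − 2C h(ξ₂) for all ξ₂ ∈ ℝ, where a ≥ 0 and λ ∈ ℂ are fixed, and h(ξ₂₀) > 0 for some ξ₂₀. Then h is unbounded as ξ₂ → +∞; in particular h ∉ L^∞(ℝ) and h is not the restriction of an L² function's square modulus with ∫ ξ₂⁴ h(ξ₂) dξ₂ < ∞. -/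
/-!
Dividing the inequality by `ξ₁*` gives `h' ≥ q h` with `q(ξ) = c₀ + c₁ ξ²`, `c₁ = 2ν/ξ₁* > 0`.
With the primitive `G(ξ) = c₀ ξ + c₁ ξ³/3` of `q`, the function `h e^{-G}` is nondecreasing,
so `h(ξ) ≥ h(ξ₀) e^{G(ξ) - G(ξ₀)}` for `ξ ≥ ξ₀`; since `G → ∞` and `h(ξ₀) > 0`, `h → ∞`.
A function tending to infinity is neither bounded nor integrable on `ℝ`.
-/

open MeasureTheory Filter Real

theorem monotone_mul_exp_neg_of_mul_le_deriv {f G q : ℝ → ℝ} (hf : Differentiable ℝ f)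
    (hG : ∀ x, HasDerivAt G (q x) x) (hfq : ∀ x, q x * f x ≤ deriv f x) :
    Monotone fun x => f x * exp (-G x) := by
  have hderiv : ∀ x, HasDerivAt (fun x => f x * exp (-G x))
      ((deriv f x - q x * f x) * exp (-G x)) x := fun x =>
    ((hf x).hasDerivAt.mul (hG x).neg.exp).congr_deriv (by rw [Pi.neg_apply]; ring)
  refine monotone_of_deriv_nonneg (fun x => (hderiv x).differentiableAt) fun x => ?_
  rw [(hderiv x).deriv]
  exact mul_nonneg (sub_nonneg.mpr (hfq x)) (exp_nonneg _)

theorem mul_exp_sub_le_of_mul_le_deriv {f G q : ℝ → ℝ} (hf : Differentiable ℝ f)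
    (hG : ∀ x, HasDerivAt G (q x) x) (hfq : ∀ x, q x * f x ≤ deriv f x) {x₀ x : ℝ}
    (hx : x₀ ≤ x) : f x₀ * exp (G x - G x₀) ≤ f x := by
  have hmono := monotone_mul_exp_neg_of_mul_le_deriv hf hG hfq hx
  calc f x₀ * exp (G x - G x₀) = f x₀ * exp (-G x₀) * exp (G x) := by
        rw [mul_assoc, ← exp_add, neg_add_eq_sub]
    _ ≤ f x * exp (-G x) * exp (G x) := by gcongr
    _ = f x := by rw [mul_assoc, ← exp_add, neg_add_cancel, exp_zero, mul_one]

theorem tendsto_atTop_of_mul_le_deriv {f G q : ℝ → ℝ} (hf : Differentiable ℝ f)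
    (hG : ∀ x, HasDerivAt G (q x) x) (hfq : ∀ x, q x * f x ≤ deriv f x)
    (hGtop : Tendsto G atTop atTop) {x₀ : ℝ} (hx₀ : 0 < f x₀) :
    Tendsto f atTop atTop := by
  have hlower : Tendsto (fun x => f x₀ * exp (G x - G x₀)) atTop atTop :=
    (tendsto_exp_atTop.comp (tendsto_atTop_add_const_right _ _ hGtop)).const_mul_atTop hx₀
  refine tendsto_atTop_mono' _ ?_ hlower
  filter_upwards [eventually_ge_atTop x₀] with x hx
  exact mul_exp_sub_le_of_mul_le_deriv hf hG hfq hx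

theorem hasDerivAt_linear_add_cubic (b c x : ℝ) :
    HasDerivAt (fun x => b * x + c * x ^ 3 / 3) (b + c * x ^ 2) x :=
  (((hasDerivAt_id x).const_mul b).add
    (((hasDerivAt_pow 3 x).const_mul c).div_const 3)).congr_deriv (by simp only [mul_one]; ring)

theorem tendsto_linear_add_cubic_atTop (b : ℝ) {c : ℝ} (hc : 0 < c) :
    Tendsto (fun x => b * x + c * x ^ 3 / 3) atTop atTop := by
  have hquad : Tendsto (fun x : ℝ => b + c * x ^ 2 / 3) atTop atTop :=
    tendsto_atTop_add_const_left _ _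
      (((tendsto_pow_atTop two_ne_zero).const_mul_atTop hc).atTop_div_const three_pos)
  refine (tendsto_id.atTop_mul_atTop₀ hquad).congr fun x => ?_
  simp only [id]
  ring

theorem not_integrable_of_tendsto_atTop {g : ℝ → ℝ} (hg : Tendsto g atTop atTop) :
    ¬ Integrable g := by
  intro hint
  obtain ⟨R, hR⟩ := eventually_atTop.mp (hg.eventually_ge_atTop 1)
  have hfin : volume {x | 1 ≤ g x} < ⊤ := hint.measure_ge_lt_top one_pos
  have hinf : volume (Set.Ici R) ≤ volume {x | 1 ≤ g x} := measure_mono fun x hx => hR x hx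
  rw [Real.volume_Ici] at hinf
  exact hfin.ne (top_le_iff.mp hinf)

theorem stmt_19_general (ν C ξ₁star a : ℝ) (lam : ℂ) (h : ℝ → ℝ)
    (hν : 0 < ν) (hξ₁ : 0 < ξ₁star)
    (hC1 : ContDiff ℝ 1 h)
    (hineq : ∀ ξ₂ : ℝ, ξ₁star * deriv h ξ₂ ≥
      2 * (lam.re + ν * (a^2 + ξ₂^2)) * h ξ₂ - 2 * C * h ξ₂)
    (ξ₂₀ : ℝ) (h0 : 0 < h ξ₂₀) :
    Filter.Tendsto h Filter.atTop Filter.atTop ∧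
    ¬ BddAbove (Set.range h) ∧
    ¬ Integrable (fun ξ₂ : ℝ => ξ₂^4 * h ξ₂) := by
  set c₀ := 2 * (lam.re - C + ν * a ^ 2) / ξ₁star
  set c₁ := 2 * ν / ξ₁star
  have hc₁ : 0 < c₁ := by positivity
  have hq : ∀ x, (c₀ + c₁ * x ^ 2) * h x ≤ deriv h x := fun x => by
    rw [← mul_le_mul_iff_of_pos_left hξ₁]
    calc ξ₁star * ((c₀ + c₁ * x ^ 2) * h x)
        = 2 * (lam.re + ν * (a ^ 2 + x ^ 2)) * h x - 2 * C * h x := by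
          simp only [c₀, c₁]; field_simp; ring
      _ ≤ ξ₁star * deriv h x := hineq x
  have htop : Tendsto h atTop atTop :=
    tendsto_atTop_of_mul_le_deriv (hC1.differentiable one_ne_zero)
      (hasDerivAt_linear_add_cubic c₀ c₁) hq (tendsto_linear_add_cubic_atTop c₀ hc₁) h0
  refine ⟨htop, not_bddAbove_of_tendsto_atTop htop, not_integrable_of_tendsto_atTop ?_⟩
  exact (tendsto_pow_atTop four_ne_zero).atTop_mul_atTop₀ htop

theorem stmt_19 (ν f C ξ₁star a : ℝ) (lam : ℂ) (h : ℝ → ℝ)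
    (hν : 0 < ν) (hf : f ∈ Set.Ioo (0:ℝ) 1) (hC : 0 < C) (hξ₁ : 0 < ξ₁star)
    (ha : 0 ≤ a)
    (hpos : ∀ x, 0 ≤ h x) (hC1 : ContDiff ℝ 1 h)
    (hineq : ∀ ξ₂ : ℝ, ξ₁star * deriv h ξ₂ ≥
      2 * (lam.re + ν * (a^2 + ξ₂^2)) * h ξ₂ - 2 * C * h ξ₂)
    (ξ₂₀ : ℝ) (h0 : 0 < h ξ₂₀) :
    Filter.Tendsto h Filter.atTop Filter.atTop ∧
    ¬ BddAbove (Set.range h) ∧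
    ¬ Integrable (fun ξ₂ : ℝ => ξ₂^4 * h ξ₂) :=
  stmt_19_general ν C ξ₁star a lam h hν hξ₁ hC1 hineq ξ₂₀ h0
end
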